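/- arXiv:1801.05008 — 6 statements merged into one kernel-verified Lean document; each statement's English description precedes it below -/
import Mathlib

section
/- Let α ≥ 2. Then (C(α)/(1+2α))·(1 − 1/√α) ≤ H₁(α,α) ≤ sup_{x ∈ [0,∞)} H₁(α,x) ≤ (C(α)/(1+2α))·(1 + 2/√α), where C(α) = ∫₀^∞ t^α / sinh t dt and H₁(α,x) = ∫₀^∞ (t^α / sinh t) · x/(x² + t²) dt for x > 0 (with H₁(α,0) = 0 for α > 1). -/
open MeasureTheory Filter Real

/-- `C(α) = ∫₀^∞ t^α / sinh t dt`. -/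
noncomputable def Cconst (α : ℝ) : ℝ :=
  ∫ t in Set.Ioi (0:ℝ), t ^ α / Real.sinh t

/-- `H₁(α,x) = ∫₀^∞ (t^α / sinh t) · x/(x²+t²) dt` (equal to `0` at `x = 0`). -/
noncomputable def H1fun (α x : ℝ) : ℝ :=
  ∫ t in Set.Ioi (0:ℝ), t ^ α / Real.sinh t * (x / (x ^ 2 + t ^ 2))

/-!
For the upper bound, `x / (x² + t²) ≤ 1 / (2t)` gives `H₁(α, x) ≤ C(α - 1) / 2`. Integrating by
parts, `(β + 1) C(β) = ∫ t^(β+1) cosh t / sinh² t`; a pointwise bound on `coth` then yields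
`(α - 1) C(α - 1) ≤ C(α) - 2^(-α) Γ(α + 1)`, and with `2 Γ(α + 1) ≤ C(α) ≤ 2 Γ(α + 1) + Γ(α)`
this gives `(1 + 2α) C(α - 1) ≤ (2 + 4 / √α) C(α)`.

For the lower bound, the tangent line of `y ↦ 1 / y` at `P = 2α² + 3α + 2` bounds `H₁(α, α)` below
by `α ((2P - α²) C(α) - C(α + 2)) / P²`, and `C(α + 2) ≤ (α + 1)(α + 2) C(α)` (again by parts)
turns this into `α C(α) / P`.
-/

open Set Topology

section SinhBounds

variable {t : ℝ}

lemma two_mul_exp_neg_mul_sinh (t : ℝ) : 2 * exp (-t) * sinh t = 1 - exp (-(2 * t)) := by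
  have h : exp (-t) * exp t = 1 := by rw [← exp_add]; simp
  rw [sinh_eq, show -(2 * t) = -t + -t by ring, exp_add]
  linear_combination h

lemma rpow_div_sinh_nonneg (β : ℝ) (ht : 0 ≤ t) : 0 ≤ t ^ β / sinh t :=
  div_nonneg (rpow_nonneg ht β) (sinh_nonneg_iff.mpr ht)

lemma two_mul_exp_neg_mul_rpow_le_rpow_div_sinh (β : ℝ) (ht : 0 < t) :
    2 * (exp (-t) * t ^ β) ≤ t ^ β / sinh t := by
  have h : 2 * (exp (-t) * t ^ β) * sinh t = t ^ β * (1 - exp (-(2 * t))) := by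
    rw [← two_mul_exp_neg_mul_sinh]; ring
  rw [le_div_iff₀ (sinh_pos_iff.mpr ht), h]
  nlinarith [mul_nonneg (rpow_nonneg ht.le β) (exp_pos (-(2 * t))).le]

lemma rpow_div_sinh_le (β : ℝ) (ht : 0 < t) :
    t ^ β / sinh t ≤ 2 * (exp (-t) * t ^ β) + exp (-t) * t ^ (β - 1) := by
  have hexp : (2 * t + 1) * exp (-(2 * t)) ≤ 1 :=
    calc (2 * t + 1) * exp (-(2 * t)) ≤ exp (2 * t) * exp (-(2 * t)) := by
          gcongr; linarith [add_one_le_exp (2 * t)]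
      _ = 1 := by rw [← exp_add]; simp
  have hsplit : t ^ β = t ^ (β - 1) * t := by rw [rpow_sub_one ht.ne', div_mul_cancel₀ _ ht.ne']
  have hmul : (2 * (exp (-t) * t ^ β) + exp (-t) * t ^ (β - 1)) * sinh t
      = t ^ (β - 1) * (2 * t + 1) * (1 - exp (-(2 * t))) / 2 := by
    rw [hsplit, ← two_mul_exp_neg_mul_sinh]; ring
  rw [div_le_iff₀ (sinh_pos_iff.mpr ht), hmul, hsplit]
  nlinarith [mul_le_mul_of_nonneg_left hexp (rpow_nonneg ht.le (β - 1))]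

lemma mul_cosh_add_two_mul_exp_neg_mul_sinh_sq_le (ht : 0 ≤ t) :
    t * cosh t + 2 * t * exp (-(2 * t)) * sinh t ^ 2 ≤ (1 + t) * sinh t := by
  set u := exp (-t)
  have hu0 : 0 ≤ u := (exp_pos _).le
  have hu1 : u ≤ 1 := exp_le_one_iff.mpr (by linarith)
  have hsq : exp (-(2 * t)) = u ^ 2 := by rw [← exp_nat_mul]; ring_nf
  have huS : 2 * u * sinh t = 1 - u ^ 2 := by rw [two_mul_exp_neg_mul_sinh, hsq]
  have hcosh : cosh t = sinh t + u := by rw [cosh_eq, sinh_eq]; ring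
  -- in terms of `u = e^{-t}` the claim reduces to `t * (u + (1 - u²)² / 2) ≤ sinh t`
  have hpoly : u + (1 - u ^ 2) ^ 2 / 2 ≤ 1 := by
    nlinarith [mul_nonneg (sub_nonneg.mpr hu1) (mul_nonneg hu0 hu0), mul_nonneg hu0 hu0]
  have hsq' : 2 * t * exp (-(2 * t)) * sinh t ^ 2 = t * (1 - u ^ 2) ^ 2 / 2 := by
    rw [← huS, hsq]; ring
  rw [hsq', hcosh]
  nlinarith [mul_le_mul_of_nonneg_left hpoly ht, self_le_sinh_iff.mpr ht]

lemma rpow_add_one_mul_cosh_div_sinh_sq_le (β : ℝ) (ht : 0 < t) :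
    t ^ (β + 1) * cosh t / sinh t ^ 2 ≤
      t ^ β / sinh t + t ^ (β + 1) / sinh t - 2 * (t ^ (β + 1) * exp (-(2 * t))) := by
  have hS := sinh_pos_iff.mpr ht
  have hdiff : t ^ β / sinh t + t ^ (β + 1) / sinh t - 2 * (t ^ (β + 1) * exp (-(2 * t)))
        - t ^ (β + 1) * cosh t / sinh t ^ 2
      = t ^ β * ((1 + t) * sinh t - (t * cosh t + 2 * t * exp (-(2 * t)) * sinh t ^ 2))
        / sinh t ^ 2 := by
    rw [rpow_add_one ht.ne']; field_simp; ring
  have := div_nonneg (mul_nonneg (rpow_nonneg ht.le β)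
    (sub_nonneg.mpr (mul_cosh_add_two_mul_exp_neg_mul_sinh_sq_le ht.le))) (sq_nonneg (sinh t))
  linarith

end SinhBounds

lemma integrableOn_exp_neg_mul_rpow {s : ℝ} (hs : -1 < s) :
    IntegrableOn (fun t => exp (-t) * t ^ s) (Ioi 0) := by
  simpa using GammaIntegral_convergent (s := s + 1) (by linarith)

lemma integral_rpow_mul_exp_neg_two_mul {s : ℝ} (hs : -1 < s) :
    ∫ t in Ioi (0 : ℝ), t ^ s * exp (-(2 * t)) = (1 / 2) ^ (s + 1) * Gamma (s + 1) := by
  have h := integral_rpow_mul_exp_neg_mul_Ioi (a := s + 1) (r := 2) (by linarith) two_pos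
  rwa [add_sub_cancel_right] at h

lemma integrableOn_rpow_mul_exp_neg_two_mul {s : ℝ} (hs : -1 < s) :
    IntegrableOn (fun t => t ^ s * exp (-(2 * t))) (Ioi 0) := by
  simpa using integrableOn_rpow_mul_exp_neg_mul_rpow (p := 1) hs one_pos two_pos

lemma continuousOn_rpow_div_sinh (β : ℝ) : ContinuousOn (fun t => t ^ β / sinh t) (Ioi 0) :=
  (continuousOn_id.rpow_const fun _ ht => Or.inl (ne_of_gt ht)).div continuous_sinh.continuousOn
    fun _ ht => (sinh_pos_iff.mpr ht).ne'

lemma integrableOn_rpow_div_sinh {β : ℝ} (hβ : 0 < β) :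
    IntegrableOn (fun t => t ^ β / sinh t) (Ioi 0) := by
  refine Integrable.mono' (((integrableOn_exp_neg_mul_rpow (by linarith : -1 < β)).const_mul 2).add
      (integrableOn_exp_neg_mul_rpow (by linarith : -1 < β - 1)))
    ((continuousOn_rpow_div_sinh β).aestronglyMeasurable measurableSet_Ioi) ?_
  filter_upwards [ae_restrict_mem measurableSet_Ioi] with t ht
  rw [norm_of_nonneg (rpow_div_sinh_nonneg β ht.le)]
  exact rpow_div_sinh_le β ht

lemma Cconst_nonneg (β : ℝ) : 0 ≤ Cconst β :=
  setIntegral_nonneg measurableSet_Ioi fun _ ht => rpow_div_sinh_nonneg β (le_of_lt ht)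

lemma two_mul_Gamma_add_one_le_Cconst {β : ℝ} (hβ : 0 < β) : 2 * Gamma (β + 1) ≤ Cconst β := by
  rw [Gamma_eq_integral (by linarith), add_sub_cancel_right, ← integral_const_mul]
  exact setIntegral_mono_on ((integrableOn_exp_neg_mul_rpow (by linarith)).const_mul 2)
    (integrableOn_rpow_div_sinh hβ) measurableSet_Ioi
    fun t ht => two_mul_exp_neg_mul_rpow_le_rpow_div_sinh β ht

lemma Cconst_le_two_mul_Gamma_add_one_add_Gamma {β : ℝ} (hβ : 0 < β) :
    Cconst β ≤ 2 * Gamma (β + 1) + Gamma β := by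
  have h1 := (integrableOn_exp_neg_mul_rpow (by linarith : -1 < β)).const_mul 2
  have h2 := integrableOn_exp_neg_mul_rpow (by linarith : -1 < β - 1)
  rw [Gamma_eq_integral (by linarith : 0 < β + 1), Gamma_eq_integral hβ, add_sub_cancel_right,
    ← integral_const_mul, ← integral_add h1 h2]
  exact setIntegral_mono_on (integrableOn_rpow_div_sinh hβ) (h1.add h2) measurableSet_Ioi
    fun t ht => rpow_div_sinh_le β ht

lemma tendsto_rpow_div_sinh_atTop (s : ℝ) : Tendsto (fun t => t ^ s / sinh t) atTop (𝓝 0) := by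
  have h : ∀ r : ℝ, Tendsto (fun t => exp (-t) * t ^ r) atTop (𝓝 0) := fun r => by
    simpa [mul_comm] using tendsto_rpow_mul_exp_neg_mul_atTop_nhds_zero r 1 one_pos
  have hbound := ((h s).const_mul 2).add (h (s - 1))
  rw [mul_zero, add_zero] at hbound
  refine tendsto_of_tendsto_of_tendsto_of_le_of_le' tendsto_const_nhds hbound ?_ ?_
  · filter_upwards [eventually_ge_atTop 0] with t ht using rpow_div_sinh_nonneg s ht
  · filter_upwards [eventually_gt_atTop 0] with t ht using rpow_div_sinh_le s ht

lemma continuousWithinAt_rpow_div_sinh {s : ℝ} (hs : 1 < s) :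
    ContinuousWithinAt (fun t => t ^ s / sinh t) (Ici 0) 0 := by
  have hbound : Tendsto (fun t : ℝ => t ^ (s - 1)) (𝓝[≥] 0) (𝓝 0) := by
    have h := (continuousAt_rpow_const 0 (s - 1) (Or.inr (by linarith))).tendsto
    rw [zero_rpow (by linarith)] at h
    exact h.mono_left nhdsWithin_le_nhds
  simp only [ContinuousWithinAt, sinh_zero, div_zero]
  refine tendsto_of_tendsto_of_tendsto_of_le_of_le' tendsto_const_nhds hbound ?_ ?_
  · filter_upwards [self_mem_nhdsWithin] with t ht using rpow_div_sinh_nonneg s ht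
  · filter_upwards [self_mem_nhdsWithin] with t (ht : 0 ≤ t)
    rcases ht.eq_or_lt with rfl | ht
    · simp only [sinh_zero, div_zero]; exact rpow_nonneg le_rfl _
    · rw [div_le_iff₀ (sinh_pos_iff.mpr ht), rpow_sub_one ht.ne', div_mul_comm]
      exact le_mul_of_one_le_left (rpow_nonneg ht.le s)
        ((one_le_div ht).mpr (self_le_sinh_iff.mpr ht.le))

lemma integrableOn_rpow_add_one_mul_cosh_div_sinh_sq {β : ℝ} (hβ : 0 < β) :
    IntegrableOn (fun t => t ^ (β + 1) * cosh t / sinh t ^ 2) (Ioi 0) := by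
  have hcont : ContinuousOn (fun t => t ^ (β + 1) * cosh t / sinh t ^ 2) (Ioi 0) :=
    ((continuous_rpow_const (by linarith)).mul continuous_cosh).continuousOn.div
      (continuous_sinh.pow 2).continuousOn fun t ht => (pow_pos (sinh_pos_iff.mpr ht) 2).ne'
  refine Integrable.mono' ((integrableOn_rpow_div_sinh hβ).add
      (integrableOn_rpow_div_sinh (by linarith : 0 < β + 1)))
    (hcont.aestronglyMeasurable measurableSet_Ioi) ?_
  filter_upwards [ae_restrict_mem measurableSet_Ioi] with t (ht : 0 < t)
  rw [norm_of_nonneg (by positivity)]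
  have := rpow_add_one_mul_cosh_div_sinh_sq_le β ht
  have : 0 ≤ t ^ (β + 1) * exp (-(2 * t)) := by positivity
  simp only [Pi.add_apply]
  linarith

/-- Integration by parts against `d/dt (t^(β+1) / sinh t)`. -/
lemma add_one_mul_Cconst_eq {β : ℝ} (hβ : 0 < β) :
    (β + 1) * Cconst β = ∫ t in Ioi 0, t ^ (β + 1) * cosh t / sinh t ^ 2 := by
  have hderiv : ∀ t ∈ Ioi (0 : ℝ), HasDerivAt (fun t => t ^ (β + 1) / sinh t)
      ((β + 1) * (t ^ β / sinh t) - t ^ (β + 1) * cosh t / sinh t ^ 2) t := by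
    intro t (ht : 0 < t)
    have hp : HasDerivAt (fun t => t ^ (β + 1)) ((β + 1) * t ^ β) t := by
      simpa using hasDerivAt_rpow_const (p := β + 1) (Or.inl ht.ne')
    refine (hp.div (hasDerivAt_sinh t) (sinh_pos_iff.mpr ht).ne').congr_deriv ?_
    field_simp
  have hint := (integrableOn_rpow_div_sinh hβ).const_mul (β + 1)
  have h := integral_Ioi_of_hasDerivAt_of_tendsto
    (continuousWithinAt_rpow_div_sinh (by linarith)) hderiv
    (hint.sub (integrableOn_rpow_add_one_mul_cosh_div_sinh_sq hβ)) (tendsto_rpow_div_sinh_atTop _)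
  rw [integral_sub hint (integrableOn_rpow_add_one_mul_cosh_div_sinh_sq hβ),
    integral_const_mul] at h
  simp only [sinh_zero, div_zero, sub_zero] at h
  rw [Cconst]
  linarith

lemma Cconst_add_one_le {β : ℝ} (hβ : 0 < β) : Cconst (β + 1) ≤ (β + 1) * Cconst β := by
  rw [add_one_mul_Cconst_eq hβ]
  refine setIntegral_mono_on (integrableOn_rpow_div_sinh (by linarith))
    (integrableOn_rpow_add_one_mul_cosh_div_sinh_sq hβ) measurableSet_Ioi fun t (ht : 0 < t) => ?_
  have hS := sinh_pos_iff.mpr ht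
  rw [div_le_div_iff₀ hS (by positivity)]
  nlinarith [mul_le_mul_of_nonneg_left (sinh_lt_cosh t).le
    (mul_nonneg (rpow_nonneg ht.le (β + 1)) hS.le)]

lemma Cconst_add_two_le {β : ℝ} (hβ : 0 < β) :
    Cconst (β + 2) ≤ (β + 1) * (β + 2) * Cconst β := by
  have h := Cconst_add_one_le (by linarith : 0 < β + 1)
  rw [add_assoc, one_add_one_eq_two] at h
  calc Cconst (β + 2) ≤ (β + 2) * Cconst (β + 1) := h
    _ ≤ (β + 2) * ((β + 1) * Cconst β) := by gcongr; exact Cconst_add_one_le hβ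
    _ = (β + 1) * (β + 2) * Cconst β := by ring

lemma mul_Cconst_add_le_Cconst_add_one {β : ℝ} (hβ : 0 < β) :
    β * Cconst β + 2 * ((1 / 2) ^ (β + 2) * Gamma (β + 2)) ≤ Cconst (β + 1) := by
  have hexp : IntegrableOn (fun t => 2 * (t ^ (β + 1) * exp (-(2 * t)))) (Ioi 0) :=
    (integrableOn_rpow_mul_exp_neg_two_mul (by linarith)).const_mul 2
  have hsum : IntegrableOn (fun t => t ^ β / sinh t + t ^ (β + 1) / sinh t) (Ioi 0) :=
    (integrableOn_rpow_div_sinh hβ).add (integrableOn_rpow_div_sinh (by linarith))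
  have h : ∫ t in Ioi 0, t ^ (β + 1) * cosh t / sinh t ^ 2 ≤
      ∫ t in Ioi 0, t ^ β / sinh t + t ^ (β + 1) / sinh t - 2 * (t ^ (β + 1) * exp (-(2 * t))) :=
    setIntegral_mono_on (integrableOn_rpow_add_one_mul_cosh_div_sinh_sq hβ)
      (hsum.sub hexp) measurableSet_Ioi fun t ht => rpow_add_one_mul_cosh_div_sinh_sq_le β ht
  rw [← add_one_mul_Cconst_eq hβ, integral_sub hsum hexp, integral_add
    (integrableOn_rpow_div_sinh hβ) (integrableOn_rpow_div_sinh (by linarith)),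
    integral_const_mul, integral_rpow_mul_exp_neg_two_mul (by linarith),
    show β + 1 + 1 = β + 2 by ring] at h
  simp only [Cconst] at h ⊢
  linarith

lemma one_add_two_mul_mul_Cconst_sub_one_le {α : ℝ} (hα : 2 ≤ α) :
    (1 + 2 * α) * Cconst (α - 1) ≤ (2 + 4 / √α) * Cconst α := by
  set s := √α
  have hs0 : 0 < s := sqrt_pos.mpr (by linarith)
  have hs2 : s ^ 2 = α := sq_sqrt (by linarith)
  set G := Gamma (α + 1)
  set q := (1 / 2 : ℝ) ^ (α + 1)
  have hstep : (α - 1) * Cconst (α - 1) + 2 * (q * G) ≤ Cconst α := by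
    have h := mul_Cconst_add_le_Cconst_add_one (β := α - 1) (by linarith)
    rwa [sub_add_cancel, show α - 1 + 2 = α + 1 by ring] at h
  have hG : 0 ≤ G := (Gamma_pos_of_pos (by linarith)).le
  have hq : 0 ≤ q := by positivity
  have hC := Cconst_nonneg α
  -- the correction term `2 q G = 2^{-α} Γ(α+1)` is needed only for `α < 3`
  have hkey : (3 - 4 * (α - 1) / s) * Cconst α ≤ (1 + 2 * α) * (2 * (q * G)) := by
    rcases le_or_gt 3 α with h3 | h3
    · have : 3 ≤ 4 * (α - 1) / s := by rw [le_div_iff₀ hs0]; nlinarith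
      nlinarith [mul_nonneg hG hq]
    · have hw : 11 / 4 ≤ 4 * (α - 1) / s := by rw [le_div_iff₀ hs0]; nlinarith
      have hq16 : 1 / 16 ≤ q := by
        calc (1 / 16 : ℝ) = (1 / 2) ^ ((4 : ℕ) : ℝ) := by rw [rpow_natCast]; norm_num
          _ ≤ q := rpow_le_rpow_of_exponent_ge (by norm_num) (by norm_num) (by push_cast; linarith)
      have hCG : Cconst α ≤ 5 / 2 * G := by
        have h := Cconst_le_two_mul_Gamma_add_one_add_Gamma (by linarith : 0 < α)
        have hΓ : α * Gamma α = G := (Gamma_add_one (by linarith)).symm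
        nlinarith [Gamma_pos_of_pos (by linarith : 0 < α)]
      nlinarith [mul_le_mul_of_nonneg_right hw hC, mul_le_mul_of_nonneg_left hq16 hG]
  refine le_of_mul_le_mul_left ?_ (by linarith : 0 < α - 1)
  linear_combination mul_le_mul_of_nonneg_left hstep (by linarith : 0 ≤ 1 + 2 * α) + hkey

lemma rpow_div_sinh_mul_div_sq_add_sq_le {α x t : ℝ} (ht : 0 < t) :
    t ^ α / sinh t * (x / (x ^ 2 + t ^ 2)) ≤ t ^ (α - 1) / sinh t / 2 := by
  have hxt : x / (x ^ 2 + t ^ 2) ≤ 1 / (2 * t) := by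
    rw [div_le_div_iff₀ (by positivity) (by positivity)]
    nlinarith [sq_nonneg (x - t)]
  calc t ^ α / sinh t * (x / (x ^ 2 + t ^ 2)) ≤ t ^ α / sinh t * (1 / (2 * t)) :=
        mul_le_mul_of_nonneg_left hxt (rpow_div_sinh_nonneg α ht.le)
    _ = t ^ (α - 1) / sinh t / 2 := by rw [rpow_sub_one ht.ne']; field_simp

lemma integrableOn_H1fun_integrand {α x : ℝ} (hα : 1 < α) (hx : 0 ≤ x) :
    IntegrableOn (fun t => t ^ α / sinh t * (x / (x ^ 2 + t ^ 2))) (Ioi 0) := by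
  have hcont : ContinuousOn (fun t => t ^ α / sinh t * (x / (x ^ 2 + t ^ 2))) (Ioi 0) :=
    (continuousOn_rpow_div_sinh α).mul (continuousOn_const.div (by fun_prop)
      fun t (ht : 0 < t) => by positivity)
  refine Integrable.mono' ((integrableOn_rpow_div_sinh (by linarith : 0 < α - 1)).div_const 2)
    (hcont.aestronglyMeasurable measurableSet_Ioi) ?_
  filter_upwards [ae_restrict_mem measurableSet_Ioi] with t (ht : 0 < t)
  rw [norm_of_nonneg (mul_nonneg (rpow_div_sinh_nonneg α ht.le) (by positivity))]
  exact rpow_div_sinh_mul_div_sq_add_sq_le ht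

lemma H1fun_le_Cconst_sub_one_div_two {α x : ℝ} (hα : 1 < α) (hx : 0 ≤ x) : H1fun α x ≤ Cconst (α - 1) / 2 := by
  rw [Cconst, ← integral_div]
  exact setIntegral_mono_on (integrableOn_H1fun_integrand hα hx)
    ((integrableOn_rpow_div_sinh (by linarith)).div_const 2) measurableSet_Ioi
    fun t ht => rpow_div_sinh_mul_div_sq_add_sq_le ht

/-- Integrates the tangent-line bound `1 / y ≥ (2 P - y) / P²` at `y = x² + t²`. -/
lemma tangent_bound_le_H1fun {β x P : ℝ} (hβ : 1 < β) (hx : 0 ≤ x) (hP : 0 < P) :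
    x * ((2 * P - x ^ 2) * Cconst β - Cconst (β + 2)) / P ^ 2 ≤ H1fun β x := by
  have h0 := integrableOn_rpow_div_sinh (β := β) (by linarith)
  have h2 := integrableOn_rpow_div_sinh (β := β + 2) (by linarith)
  have hval : x * ((2 * P - x ^ 2) * Cconst β - Cconst (β + 2)) / P ^ 2 =
      ∫ t in Ioi 0, x * (2 * P - x ^ 2) / P ^ 2 * (t ^ β / sinh t)
        - x / P ^ 2 * (t ^ (β + 2) / sinh t) := by
    rw [integral_sub (h0.const_mul _) (h2.const_mul _), integral_const_mul, integral_const_mul]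
    simp only [Cconst]
    ring
  rw [hval]
  refine setIntegral_mono_on ((h0.const_mul _).sub (h2.const_mul _))
    (integrableOn_H1fun_integrand hβ hx) measurableSet_Ioi fun t (ht : 0 < t) => ?_
  have htangent : (2 * P - (x ^ 2 + t ^ 2)) / P ^ 2 ≤ 1 / (x ^ 2 + t ^ 2) := by
    rw [div_le_div_iff₀ (by positivity) (by positivity)]
    nlinarith [sq_nonneg (x ^ 2 + t ^ 2 - P)]
  calc x * (2 * P - x ^ 2) / P ^ 2 * (t ^ β / sinh t) - x / P ^ 2 * (t ^ (β + 2) / sinh t)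
      = t ^ β / sinh t * x * ((2 * P - (x ^ 2 + t ^ 2)) / P ^ 2) := by
        rw [rpow_add ht, rpow_two]; ring
    _ ≤ t ^ β / sinh t * x * (1 / (x ^ 2 + t ^ 2)) := by
        gcongr
    _ = t ^ β / sinh t * (x / (x ^ 2 + t ^ 2)) := by ring

lemma mul_Cconst_div_le_H1fun_self {α : ℝ} (hα : 1 < α) :
    α * Cconst α / (2 * α ^ 2 + 3 * α + 2) ≤ H1fun α α := by
  refine le_trans ?_ (tangent_bound_le_H1fun hα (by linarith) (by positivity : 0 < 2 * α ^ 2 + 3 * α + 2))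
  rw [div_le_div_iff₀ (by positivity) (by positivity)]
  nlinarith [mul_le_mul_of_nonneg_left (Cconst_add_two_le (by linarith : 0 < α))
    (by positivity : 0 ≤ α * (2 * α ^ 2 + 3 * α + 2))]

lemma one_sub_one_div_sqrt_mul_le {α : ℝ} (hα : 1 ≤ α) :
    (1 - 1 / √α) * (2 * α ^ 2 + 3 * α + 2) ≤ α * (1 + 2 * α) := by
  have hs0 : 0 < √α := sqrt_pos.mpr (by linarith)
  have hsα : √α ≤ α := by nlinarith [sq_sqrt (by linarith : 0 ≤ α), sqrt_nonneg α]
  have : 2 * α + 2 ≤ (2 * α ^ 2 + 3 * α + 2) / √α := by rw [le_div_iff₀ hs0]; nlinarith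
  rw [sub_mul, one_mul, one_div_mul_eq_div]
  linarith

theorem stmt_3 (α : ℝ) (hα : 2 ≤ α) :
    (Cconst α / (1 + 2 * α)) * (1 - 1 / Real.sqrt α) ≤ H1fun α α ∧
    H1fun α α ≤ (⨆ x : Set.Ici (0:ℝ), H1fun α (x : ℝ)) ∧
    (⨆ x : Set.Ici (0:ℝ), H1fun α (x : ℝ)) ≤
      (Cconst α / (1 + 2 * α)) * (1 + 2 / Real.sqrt α) := by
  have hC := Cconst_nonneg α
  have hbdd : BddAbove (range fun x : Ici (0 : ℝ) => H1fun α x) :=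
    ⟨Cconst (α - 1) / 2, by rintro _ ⟨x, rfl⟩; exact H1fun_le_Cconst_sub_one_div_two (by linarith) x.2⟩
  refine ⟨?_, le_ciSup hbdd ⟨α, mem_Ici.mpr (by linarith)⟩,
    ciSup_le fun x => (H1fun_le_Cconst_sub_one_div_two (by linarith) x.2).trans ?_⟩
  · calc Cconst α / (1 + 2 * α) * (1 - 1 / √α)
        = Cconst α * ((1 - 1 / √α) * (2 * α ^ 2 + 3 * α + 2))
          / ((1 + 2 * α) * (2 * α ^ 2 + 3 * α + 2)) := by field_simp
      _ ≤ Cconst α * (α * (1 + 2 * α)) / ((1 + 2 * α) * (2 * α ^ 2 + 3 * α + 2)) := by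
          gcongr Cconst α * ?_ / _; exact one_sub_one_div_sqrt_mul_le (by linarith)
      _ = α * Cconst α / (2 * α ^ 2 + 3 * α + 2) := by field_simp
      _ ≤ H1fun α α := mul_Cconst_div_le_H1fun_self (by linarith)
  · rw [show Cconst α / (1 + 2 * α) * (1 + 2 / √α) = (2 + 4 / √α) * Cconst α / (2 * (1 + 2 * α))
      by field_simp; ring, le_div_iff₀ (by positivity)]
    linarith [one_add_two_mul_mul_Cconst_sub_one_le hα]
end

section
/- Let n be a positive integer and let x ∈ [−2n, 2n]. Then |T₂ₙ₊₁(x/(2n))| ≤ (1 + 1/(2n)) · |x|, where T₂ₙ₊₁ is the Chebyshev polynomial of the first kind of degree 2n+1. -/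
open Polynomial Real

lemma abs_sin_nat_mul_le (m : ℕ) (θ : ℝ) : |Real.sin (m * θ)| ≤ m * |Real.sin θ| := by
  induction m with
  | zero => simp
  | succ k ih =>
    have : Real.sin ((k + 1 : ℕ) * θ) = Real.sin (k * θ) * Real.cos θ
        + Real.cos (k * θ) * Real.sin θ := by
      push_cast
      rw [add_mul, one_mul, Real.sin_add]
    rw [this]
    calc |Real.sin (k * θ) * Real.cos θ + Real.cos (k * θ) * Real.sin θ|
        ≤ |Real.sin (k * θ) * Real.cos θ| + |Real.cos (k * θ) * Real.sin θ| := abs_add_le _ _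
      _ ≤ |Real.sin (k * θ)| * 1 + 1 * |Real.sin θ| := by
          rw [abs_mul, abs_mul]
          gcongr <;> exact Real.abs_cos_le_one _
      _ ≤ k * |Real.sin θ| + 1 * |Real.sin θ| := by
          rw [mul_one]; gcongr
      _ = (k + 1 : ℕ) * |Real.sin θ| := by push_cast; ring

lemma abs_cos_odd_mul_le (k : ℕ) (θ : ℝ) :
    |Real.cos ((2 * k + 1 : ℝ) * θ)| ≤ (2 * k + 1 : ℝ) * |Real.cos θ| := by
  have key : Real.sin ((2 * (k:ℝ) + 1) * (π / 2 - θ))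
      = (-1) ^ k * Real.cos ((2 * k + 1 : ℝ) * θ) := by
    have : (2 * (k:ℝ) + 1) * (π / 2 - θ) = (π / 2 - (2 * k + 1) * θ) + k * π := by ring
    rw [this, Real.sin_add_nat_mul_pi, Real.sin_pi_div_two_sub]
  have h1 : |Real.cos ((2 * k + 1 : ℝ) * θ)|
      = |Real.sin ((2 * (k:ℝ) + 1) * (π / 2 - θ))| := by
    rw [key, abs_mul, abs_pow, abs_neg, abs_one, one_pow, one_mul]
  have h2 := abs_sin_nat_mul_le (2 * k + 1) (π / 2 - θ)
  rw [Real.sin_pi_div_two_sub] at h2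
  push_cast at h2
  rw [h1]
  convert h2 using 2

theorem stmt_7 (n : ℕ) (hn : 1 ≤ n) (x : ℝ)
    (hx : x ∈ Set.Icc (-(2 * (n : ℝ))) (2 * (n : ℝ))) :
    |(Polynomial.Chebyshev.T ℝ (2 * n + 1)).eval (x / (2 * n))| ≤
      (1 + 1 / (2 * (n : ℝ))) * |x| := by
  have hn' : (0:ℝ) < 2 * n := by positivity
  set y : ℝ := x / (2 * n) with hy
  have hy1 : -1 ≤ y := by
    rw [hy, le_div_iff₀ hn']
    linarith [hx.1]
  have hy2 : y ≤ 1 := by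
    rw [hy, div_le_iff₀ hn']
    linarith [hx.2]
  have hcos : Real.cos (Real.arccos y) = y := Real.cos_arccos hy1 hy2
  have heval : (Polynomial.Chebyshev.T ℝ (2 * n + 1)).eval y
      = Real.cos ((2 * (n:ℝ) + 1) * Real.arccos y) := by
    conv_lhs => rw [← hcos]
    rw [Polynomial.Chebyshev.T_real_cos]
    push_cast
    ring_nf
  rw [heval]
  calc |Real.cos ((2 * (n:ℝ) + 1) * Real.arccos y)|
      ≤ (2 * n + 1 : ℝ) * |Real.cos (Real.arccos y)| := abs_cos_odd_mul_le n _
    _ = (2 * n + 1 : ℝ) * (|x| / (2 * n)) := by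
        rw [hcos, hy, abs_div, abs_of_pos hn']
    _ = (1 + 1 / (2 * (n : ℝ))) * |x| := by field_simp
end

section
/- Let α > 0. Then liminf_{n→∞} sup_{x ∈ [0,2n]} | T₂ₙ₊₁(x/(2n)) · H₁(α,x) | ≥ sup_{x ∈ [0,∞)} | H(α,x) |, where T₂ₙ₊₁ is the Chebyshev polynomial of the first kind of degree 2n+1, H₁(α,x) = ∫₀^∞ (t^α / sinh t) · x/(x² + t²) dt and H(α,x) = ∫₀^∞ (t^α / sinh t) · (x · sin x)/(x² + t²) dt. -/
open MeasureTheory Filter Real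
open scoped Topology

/-- `H(α,x) = ∫₀^∞ (t^α / sinh t) · (x·sin x)/(x²+t²) dt`. -/
noncomputable def Hfun (α x : ℝ) : ℝ :=
  ∫ t in Set.Ioi (0:ℝ), t ^ α / Real.sinh t * (x * Real.sin x / (x ^ 2 + t ^ 2))

noncomputable def Cint (α : ℝ) : ℝ := ∫ t in Set.Ioi (0:ℝ), t ^ α / Real.sinh t

lemma g_integrable {α : ℝ} (hα : 0 < α) :
    IntegrableOn (fun t : ℝ => t ^ α / Real.sinh t) (Set.Ioi 0) := by
  have hmeas : AEStronglyMeasurable (fun t : ℝ => t ^ α / Real.sinh t)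
      (volume.restrict (Set.Ioi 0)) := by
    apply ContinuousOn.aestronglyMeasurable _ measurableSet_Ioi
    exact (continuousOn_id.rpow_const fun t ht => Or.inl (ne_of_gt ht)).div
      Real.continuous_sinh.continuousOn (fun t ht => (Real.sinh_pos_iff.mpr ht).ne')
  have hint : Integrable (fun t : ℝ =>
      Real.exp 1 * (Real.exp (-t) * t ^ (α - 1)) + 4 * (Real.exp (-t) * t ^ (α + 1 - 1)))
      (volume.restrict (Set.Ioi 0)) :=
    ((Real.GammaIntegral_convergent hα).const_mul _).add
      ((Real.GammaIntegral_convergent (by linarith : (0:ℝ) < α + 1)).const_mul _)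
  refine hint.mono' hmeas ?_
  rw [ae_restrict_iff' measurableSet_Ioi]
  filter_upwards with t ht
  have ht' : (0:ℝ) < t := ht
  have hsinh : 0 < Real.sinh t := Real.sinh_pos_iff.mpr ht'
  have hga : (0:ℝ) ≤ t ^ α := Real.rpow_nonneg ht'.le α
  rw [Real.norm_eq_abs, abs_of_nonneg (div_nonneg hga hsinh.le)]
  have hsimp : α + 1 - 1 = α := by ring
  rw [hsimp]
  rcases le_total t 1 with h1 | h1
  · have hb1 : t ^ α / Real.sinh t ≤ t ^ (α - 1) := by
      have hts : t ≤ Real.sinh t := Real.self_le_sinh_iff.mpr ht'.le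
      have : t ^ α / Real.sinh t ≤ t ^ α / t := by gcongr
      calc t ^ α / Real.sinh t ≤ t ^ α / t := this
        _ = t ^ (α - 1) := by
            rw [Real.rpow_sub ht', Real.rpow_one]
    have hexp : (1:ℝ) ≤ Real.exp 1 * Real.exp (-t) := by
      rw [← Real.exp_add]
      exact Real.one_le_exp (by linarith)
    have hga1 : (0:ℝ) ≤ t ^ (α - 1) := Real.rpow_nonneg ht'.le _
    nlinarith [Real.exp_nonneg (-t), mul_nonneg (Real.exp_nonneg (-t)) hga]
  · have h2 : (2:ℝ) ≤ Real.exp t := by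
      have := Real.add_one_le_exp (1:ℝ)
      have := Real.exp_le_exp.mpr h1
      linarith
    have hexpn : Real.exp (-t) ≤ 1 := Real.exp_le_one_iff.mpr (by linarith)
    have hsinh2 : Real.exp t / 4 ≤ Real.sinh t := by
      rw [Real.sinh_eq]
      linarith
    have hb2 : t ^ α / Real.sinh t ≤ 4 * (Real.exp (-t) * t ^ α) := by
      have h4 : (0:ℝ) < Real.exp t / 4 := by positivity
      calc t ^ α / Real.sinh t ≤ t ^ α / (Real.exp t / 4) := by gcongr
        _ = 4 * (Real.exp (-t) * t ^ α) := by
            rw [Real.exp_neg]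
            field_simp
    have : (0:ℝ) ≤ Real.exp 1 * (Real.exp (-t) * t ^ (α - 1)) := by positivity
    linarith

lemma Cint_nonneg {α : ℝ} : 0 ≤ Cint α := by
  apply setIntegral_nonneg measurableSet_Ioi
  intro t ht
  exact div_nonneg (Real.rpow_nonneg (le_of_lt ht) α) (Real.sinh_pos_iff.mpr ht).le

lemma H_eq (α x : ℝ) : Hfun α x = Real.sin x * H1fun α x := by
  unfold Hfun H1fun
  rw [← integral_const_mul]
  congr 1
  funext t
  ring

lemma xH1_bound {α : ℝ} (hα : 0 < α) {x : ℝ} (hx : 0 ≤ x) : x * |H1fun α x| ≤ Cint α := by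
  have h1 : |H1fun α x| ≤
      ∫ t in Set.Ioi (0:ℝ), ‖t ^ α / Real.sinh t * (x / (x ^ 2 + t ^ 2))‖ := by
    rw [H1fun, ← Real.norm_eq_abs]
    exact norm_integral_le_integral_norm _
  calc x * |H1fun α x|
      ≤ x * ∫ t in Set.Ioi (0:ℝ), ‖t ^ α / Real.sinh t * (x / (x ^ 2 + t ^ 2))‖ :=
        mul_le_mul_of_nonneg_left h1 hx
    _ = ∫ t in Set.Ioi (0:ℝ), x * ‖t ^ α / Real.sinh t * (x / (x ^ 2 + t ^ 2))‖ :=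
        (integral_const_mul x _).symm
    _ ≤ Cint α := by
        apply integral_mono_of_nonneg
        · filter_upwards with t
          positivity
        · exact g_integrable hα
        · rw [Filter.EventuallyLE, ae_restrict_iff' measurableSet_Ioi]
          filter_upwards with t ht
          have ht' : (0:ℝ) < t := ht
          have hg : (0:ℝ) ≤ t ^ α / Real.sinh t :=
            div_nonneg (Real.rpow_nonneg ht'.le α) (Real.sinh_pos_iff.mpr ht').le
          have hd : (0:ℝ) ≤ x / (x ^ 2 + t ^ 2) := by positivity
          rw [norm_mul, Real.norm_eq_abs, Real.norm_eq_abs, abs_of_nonneg hg, abs_of_nonneg hd]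
          have hxd : x * (x / (x ^ 2 + t ^ 2)) ≤ 1 := by
            rw [← mul_div_assoc, div_le_one (by positivity)]
            nlinarith
          nlinarith [mul_le_mul_of_nonneg_left hxd hg]

lemma T_eq (n : ℕ) {u : ℝ} (h0 : 0 ≤ u) (h1 : u ≤ 1) :
    (Polynomial.Chebyshev.T ℝ (2 * n + 1)).eval u =
      (-1) ^ n * Real.sin ((2 * (n:ℝ) + 1) * Real.arcsin u) := by
  have hc : Real.cos (Real.arccos u) = u := Real.cos_arccos (by linarith) h1
  conv_lhs => rw [← hc]
  rw [Polynomial.Chebyshev.T_real_cos]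
  have harg : ((2 * (n:ℤ) + 1 : ℤ) : ℝ) * Real.arccos u
      = (n:ℝ) * π - ((2 * (n:ℝ) + 1) * Real.arcsin u - π / 2) := by
    rw [Real.arccos_eq_pi_div_two_sub_arcsin]
    push_cast
    ring
  rw [harg, Real.cos_nat_mul_pi_sub]
  congr 1
  rw [← Real.cos_neg, neg_sub, Real.cos_pi_div_two_sub]

lemma T_le (n : ℕ) {u : ℝ} (h0 : 0 ≤ u) (h1 : u ≤ 1) :
    |(Polynomial.Chebyshev.T ℝ (2 * n + 1)).eval u| ≤ (2 * (n:ℝ) + 1) * (π / 2) * u := by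
  rw [T_eq n h0 h1, abs_mul, abs_pow, abs_neg, abs_one, one_pow, one_mul]
  set y := Real.arcsin u with hy
  have hy0 : 0 ≤ y := Real.arcsin_nonneg.mpr h0
  have hy2 : y ≤ π / 2 := Real.arcsin_le_pi_div_two u
  have hsy : Real.sin y = u := Real.sin_arcsin (by linarith) h1
  have hπ : 0 < π := Real.pi_pos
  have h2 : 2 / π * y ≤ u := hsy ▸ Real.mul_le_sin hy0 hy2
  have hyle : y ≤ π / 2 * u := by
    have := mul_le_mul_of_nonneg_left h2 (le_of_lt (by positivity : (0:ℝ) < π / 2))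
    calc y = π / 2 * (2 / π * y) := by
          field_simp
      _ ≤ π / 2 * u := this
  calc |Real.sin ((2 * (n:ℝ) + 1) * y)| ≤ |(2 * (n:ℝ) + 1) * y| := Real.abs_sin_le_abs
    _ = (2 * (n:ℝ) + 1) * y := abs_of_nonneg (by positivity)
    _ ≤ (2 * (n:ℝ) + 1) * (π / 2 * u) := by
        exact mul_le_mul_of_nonneg_left hyle (by positivity)
    _ = (2 * (n:ℝ) + 1) * (π / 2) * u := by ring

lemma prod_bound {α : ℝ} (hα : 0 < α) (n : ℕ) (hn : 1 ≤ n) {x : ℝ}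
    (hx : x ∈ Set.Icc (0:ℝ) (2 * n)) :
    |(Polynomial.Chebyshev.T ℝ (2 * n + 1)).eval (x / (2 * n)) * H1fun α x|
      ≤ π * Cint α := by
  have hn' : (0:ℝ) < 2 * n := by
    have : (1:ℝ) ≤ n := by exact_mod_cast hn
    linarith
  have hu0 : 0 ≤ x / (2 * (n:ℝ)) := div_nonneg hx.1 hn'.le
  have hu1 : x / (2 * (n:ℝ)) ≤ 1 := (div_le_one hn').mpr hx.2
  have hπ : 0 < π := Real.pi_pos
  have hC : 0 ≤ Cint α := Cint_nonneg
  rw [abs_mul]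
  calc |(Polynomial.Chebyshev.T ℝ (2 * n + 1)).eval (x / (2 * n))| * |H1fun α x|
      ≤ ((2 * (n:ℝ) + 1) * (π / 2) * (x / (2 * n))) * |H1fun α x| :=
        mul_le_mul_of_nonneg_right (T_le n hu0 hu1) (abs_nonneg _)
    _ = ((2 * (n:ℝ) + 1) / (2 * n)) * (π / 2) * (x * |H1fun α x|) := by ring
    _ ≤ (π / 2) * (2 * Cint α) := by
        have h1 : (2 * (n:ℝ) + 1) / (2 * n) ≤ 2 := by
          rw [div_le_iff₀ hn']
          have : (1:ℝ) ≤ n := by exact_mod_cast hn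
          linarith
        have h2 : x * |H1fun α x| ≤ Cint α := xH1_bound hα hx.1
        have h2' : 0 ≤ x * |H1fun α x| := mul_nonneg hx.1 (abs_nonneg _)
        have hab : ((2 * (n:ℝ) + 1) / (2 * n)) * (x * |H1fun α x|) ≤ 2 * Cint α :=
          mul_le_mul h1 h2 h2' (by norm_num)
        calc ((2 * (n:ℝ) + 1) / (2 * n)) * (π / 2) * (x * |H1fun α x|)
            = (π / 2) * (((2 * (n:ℝ) + 1) / (2 * n)) * (x * |H1fun α x|)) := by ring
          _ ≤ (π / 2) * (2 * Cint α) := mul_le_mul_of_nonneg_left hab (by positivity)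
    _ = π * Cint α := by ring

lemma arcsin_lim {x : ℝ} (hx : 0 ≤ x) :
    Tendsto (fun n : ℕ => (2 * (n:ℝ) + 1) * Real.arcsin (x / (2 * n))) atTop (𝓝 x) := by
  rcases eq_or_lt_of_le hx with h0 | hx0
  · simp only [← h0, zero_div, Real.arcsin_zero, mul_zero]
    exact tendsto_const_nhds
  · have h2n : Tendsto (fun n : ℕ => 2 * (n:ℝ)) atTop atTop :=
      (tendsto_natCast_atTop_atTop).const_mul_atTop two_pos
    have hu : Tendsto (fun n : ℕ => x / (2 * (n:ℝ))) atTop (𝓝[≠] 0) := by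
      rw [tendsto_nhdsWithin_iff]
      constructor
      · exact Tendsto.div_atTop tendsto_const_nhds h2n
      · filter_upwards [eventually_ge_atTop 1] with n hn
        have hn' : (0:ℝ) < 2 * n := by
          have : (1:ℝ) ≤ n := by exact_mod_cast hn
          linarith
        exact Set.mem_compl_singleton_iff.mpr (div_pos hx0 hn').ne'
    have hslope : Tendsto (fun n : ℕ => Real.arcsin (x / (2 * (n:ℝ))) / (x / (2 * n)))
        atTop (𝓝 1) := by
      have hd := Real.hasDerivAt_arcsin (by norm_num : (0:ℝ) ≠ -1) (by norm_num : (0:ℝ) ≠ 1)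
      rw [hasDerivAt_iff_tendsto_slope] at hd
      have hcomp := hd.comp hu
      have : (1:ℝ) / Real.sqrt (1 - 0 ^ 2) = 1 := by norm_num
      rw [this] at hcomp
      refine hcomp.congr fun n => ?_
      simp [slope_def_field, Real.arcsin_zero, div_eq_mul_inv]
    have hxn : Tendsto (fun n : ℕ => (2 * (n:ℝ) + 1) * (x / (2 * n))) atTop (𝓝 x) := by
      have h₁ : Tendsto (fun n : ℕ => x + x / (2 * (n:ℝ))) atTop (𝓝 (x + 0)) :=
        tendsto_const_nhds.add (Tendsto.div_atTop tendsto_const_nhds h2n)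
      rw [add_zero] at h₁
      refine Tendsto.congr' ?_ h₁
      filter_upwards [eventually_ge_atTop 1] with n hn
      have hn' : (0:ℝ) < 2 * n := by
        have : (1:ℝ) ≤ n := by exact_mod_cast hn
        linarith
      field_simp
    have hmul := hslope.mul hxn
    rw [one_mul] at hmul
    refine Tendsto.congr' ?_ hmul
    filter_upwards [eventually_ge_atTop 1] with n hn
    have hn' : (0:ℝ) < 2 * n := by
      have : (1:ℝ) ≤ n := by exact_mod_cast hn
      linarith
    have hne : x / (2 * (n:ℝ)) ≠ 0 := (div_pos hx0 hn').ne'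
    field_simp

theorem stmt_9 (α : ℝ) (hα : 0 < α) :
    Filter.liminf
      (fun n : ℕ => ⨆ x : Set.Icc (0:ℝ) (2 * (n : ℝ)),
        |(Polynomial.Chebyshev.T ℝ (2 * n + 1)).eval ((x : ℝ) / (2 * n)) * H1fun α (x : ℝ)|)
      atTop
    ≥ ⨆ x : Set.Ici (0:ℝ), |Hfun α (x : ℝ)| := by
  have hC : 0 ≤ Cint α := Cint_nonneg
  set S : ℕ → ℝ := fun n => ⨆ x : Set.Icc (0:ℝ) (2 * (n : ℝ)),
    |(Polynomial.Chebyshev.T ℝ (2 * n + 1)).eval ((x : ℝ) / (2 * n)) * H1fun α (x : ℝ)| with hS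
  rw [ge_iff_le]
  haveI : Nonempty (Set.Ici (0:ℝ)) := ⟨⟨0, Set.self_mem_Ici⟩⟩
  refine ciSup_le fun p => ?_
  obtain ⟨x, hx⟩ := p
  simp only
  set L : ℕ → ℝ := fun n =>
    |(Polynomial.Chebyshev.T ℝ (2 * n + 1)).eval (x / (2 * n)) * H1fun α x| with hL
  have hxIci : (0:ℝ) ≤ x := hx
  -- eventually x ≤ 2n and 1 ≤ n
  have hev : ∀ᶠ n : ℕ in atTop, 1 ≤ n ∧ x ≤ 2 * (n:ℝ) := by
    filter_upwards [eventually_ge_atTop (max 1 ⌈x⌉₊)] with n hn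
    refine ⟨le_trans (le_max_left _ _) hn, ?_⟩
    have h1 : x ≤ (⌈x⌉₊ : ℝ) := Nat.le_ceil x
    have h2 : (⌈x⌉₊ : ℝ) ≤ n := by
      exact_mod_cast le_trans (le_max_right 1 ⌈x⌉₊) hn
    have : (0:ℝ) ≤ n := Nat.cast_nonneg n
    linarith
  have hbdd : ∀ n : ℕ, 1 ≤ n → BddAbove (Set.range fun y : Set.Icc (0:ℝ) (2 * (n : ℝ)) =>
      |(Polynomial.Chebyshev.T ℝ (2 * n + 1)).eval ((y : ℝ) / (2 * n)) * H1fun α (y : ℝ)|) := by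
    intro n hn
    refine ⟨π * Cint α, ?_⟩
    rintro _ ⟨⟨y, hy⟩, rfl⟩
    exact prod_bound hα n hn hy
  have hLS : ∀ᶠ n : ℕ in atTop, L n ≤ S n := by
    filter_upwards [hev] with n ⟨hn1, hn2⟩
    exact le_ciSup (hbdd n hn1) (⟨x, hxIci, hn2⟩ : Set.Icc (0:ℝ) (2 * (n:ℝ)))
  have hLlim : Tendsto L atTop (𝓝 |Hfun α x|) := by
    have hsin : Tendsto (fun n : ℕ => |Real.sin ((2 * (n:ℝ) + 1) * Real.arcsin (x / (2 * n)))|)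
        atTop (𝓝 |Real.sin x|) :=
      ((continuous_abs.comp Real.continuous_sin).tendsto x).comp (arcsin_lim hxIci)
    have h1 := hsin.mul_const |H1fun α x|
    rw [show |Real.sin x| * |H1fun α x| = |Hfun α x| by rw [H_eq, abs_mul]] at h1
    refine h1.congr' ?_
    filter_upwards [hev] with n ⟨hn1, hn2⟩
    have hn' : (0:ℝ) < 2 * n := by
      have : (1:ℝ) ≤ n := by exact_mod_cast hn1
      linarith
    have hu0 : 0 ≤ x / (2 * (n:ℝ)) := div_nonneg hxIci hn'.le
    have hu1 : x / (2 * (n:ℝ)) ≤ 1 := (div_le_one hn').mpr hn2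
    simp only [hL, abs_mul, T_eq n hu0 hu1, abs_pow, abs_neg, abs_one, one_pow, one_mul]
  have hSbd : ∀ᶠ n : ℕ in atTop, S n ≤ π * Cint α := by
    filter_upwards [eventually_ge_atTop 1] with n hn
    haveI : Nonempty (Set.Icc (0:ℝ) (2 * (n:ℝ))) := by
      exact ⟨⟨0, Set.mem_Icc.mpr ⟨le_refl 0, by positivity⟩⟩⟩
    exact ciSup_le fun ⟨y, hy⟩ => prod_bound hα n hn hy
  calc |Hfun α x| = liminf L atTop := (hLlim.liminf_eq).symm
    _ ≤ liminf S atTop := by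
        exact Filter.liminf_le_liminf hLS hLlim.isBoundedUnder_ge
          (Filter.isCoboundedUnder_ge_of_eventually_le atTop hSbd)
end

section
/- Let α > 0 be fixed and let x > 0. Then S(α,x) = ∫₀^∞ ( t^α · (t − α) / (2 · sinh t) ) · (x² + α²)/(x² + t²) dt, where S(α,x) = (α·x^{α−1}/2)·(x² + α²)·R(α,x), R(α,x) = (x/α)·F(α+1,x) − F(α,x), and F(β,x) = ∫₀^∞ t^β / (sinh(xt) · (1 + t²)) dt. -/
open MeasureTheory Filter Real

lemma integ_aux (β x : ℝ) (hβ : 0 < β) (hx : 0 < x) :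
    IntegrableOn (fun u : ℝ => u ^ β / (Real.sinh u * (x ^ 2 + u ^ 2))) (Set.Ioi 0) := by
  have hG : IntegrableOn (fun u : ℝ => (2 / x ^ 2 + 2) * (Real.exp (-u) * u ^ (β - 1)))
      (Set.Ioi 0) := (Real.GammaIntegral_convergent hβ).const_mul _
  refine hG.mono' ?_ ?_
  · apply Measurable.aestronglyMeasurable
    fun_prop
  · rw [ae_restrict_iff' measurableSet_Ioi]
    filter_upwards with u hu
    replace hu : (0:ℝ) < u := hu
    have hs : 0 < Real.sinh u := Real.sinh_pos_iff.mpr hu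
    have hd : 0 < Real.sinh u * (x ^ 2 + u ^ 2) := mul_pos hs (by positivity)
    have hp : (0:ℝ) < u ^ β := Real.rpow_pos_of_pos hu β
    have h2 : Real.exp (-u) ≤ 1 := by
      rw [Real.exp_le_one_iff]; linarith
    have h3 : u ≤ Real.sinh u := Real.self_le_sinh_iff.mpr hu.le
    have hx2 : (0:ℝ) < x ^ 2 := by positivity
    have h5 : 2 / x ^ 2 * x ^ 2 = 2 := div_mul_cancel₀ _ hx2.ne'
    have h4 : 2 * u + 1 ≤ (2 / x ^ 2 + 2) * (x ^ 2 + u ^ 2) := by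
      have h6 : 0 ≤ 2 / x ^ 2 * u ^ 2 := by positivity
      nlinarith [sq_nonneg (2 * u - 1), sq_nonneg x]
    have key : u * Real.exp u ≤ (2 / x ^ 2 + 2) * (Real.sinh u * (x ^ 2 + u ^ 2)) := by
      have hsinh : Real.sinh u = (Real.exp u - Real.exp (-u)) / 2 := Real.sinh_eq u
      calc u * Real.exp u = 2 * u * Real.sinh u + u * Real.exp (-u) := by rw [hsinh]; ring
        _ ≤ 2 * u * Real.sinh u + u := by nlinarith [mul_le_of_le_one_right hu.le h2]
        _ ≤ (2 * u + 1) * Real.sinh u := by nlinarith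
        _ ≤ ((2 / x ^ 2 + 2) * (x ^ 2 + u ^ 2)) * Real.sinh u :=
            mul_le_mul_of_nonneg_right h4 hs.le
        _ = (2 / x ^ 2 + 2) * (Real.sinh u * (x ^ 2 + u ^ 2)) := by ring
    have hu' : u ≤ (2 / x ^ 2 + 2) * (Real.sinh u * (x ^ 2 + u ^ 2)) * Real.exp (-u) := by
      calc u = u * Real.exp u * Real.exp (-u) := by rw [mul_assoc, ← Real.exp_add]; simp
        _ ≤ _ := mul_le_mul_of_nonneg_right key (Real.exp_pos _).le
    rw [Real.norm_eq_abs, abs_of_nonneg (by positivity), Real.rpow_sub hu, Real.rpow_one,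
      div_le_iff₀ hd]
    calc u ^ β = u ^ β / u * u := (div_mul_cancel₀ _ hu.ne').symm
      _ ≤ u ^ β / u * ((2 / x ^ 2 + 2) * (Real.sinh u * (x ^ 2 + u ^ 2)) * Real.exp (-u)) :=
          mul_le_mul_of_nonneg_left hu' (by positivity)
      _ = (2 / x ^ 2 + 2) * (Real.exp (-u) * (u ^ β / u)) * (Real.sinh u * (x ^ 2 + u ^ 2)) := by
          ring

/-- `F(β,x) = ∫₀^∞ t^β / (sinh(xt)·(1+t²)) dt`. -/
noncomputable def Ffun (β x : ℝ) : ℝ :=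
  ∫ t in Set.Ioi (0:ℝ), t ^ β / (Real.sinh (x * t) * (1 + t ^ 2))

/-- `R(α,x) = (x/α)·F(α+1,x) − F(α,x)`. -/
noncomputable def Rfun (α x : ℝ) : ℝ :=
  (x / α) * Ffun (α + 1) x - Ffun α x

/-- `S(α,x) = (α·x^{α−1}/2)·(x²+α²)·R(α,x)`. -/
noncomputable def Sfun (α x : ℝ) : ℝ :=
  (α * x ^ (α - 1) / 2) * (x ^ 2 + α ^ 2) * Rfun α x

lemma Ffun_eq_aux (β x : ℝ) (hx : 0 < x) :
    Ffun β x = x ^ (1 - β) *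
      ∫ u in Set.Ioi (0:ℝ), u ^ β / (Real.sinh u * (x ^ 2 + u ^ 2)) := by
  have h1 : Ffun β x = ∫ t in Set.Ioi (0:ℝ),
      (fun u : ℝ => (u / x) ^ β * x ^ 2 / (Real.sinh u * (x ^ 2 + u ^ 2))) (x * t) := by
    unfold Ffun
    apply setIntegral_congr_fun measurableSet_Ioi
    intro t ht
    replace ht : (0:ℝ) < t := ht
    have hs : Real.sinh (x * t) ≠ 0 := (Real.sinh_pos_iff.mpr (by positivity)).ne'
    have h1t : (1:ℝ) + t ^ 2 ≠ 0 := by positivity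
    simp only
    rw [mul_div_cancel_left₀ _ hx.ne']
    field_simp
  rw [h1, MeasureTheory.integral_comp_mul_left_Ioi
    (fun u : ℝ => (u / x) ^ β * x ^ 2 / (Real.sinh u * (x ^ 2 + u ^ 2))) 0 hx, mul_zero]
  have h2 : ∫ u in Set.Ioi (0:ℝ), (u / x) ^ β * x ^ 2 / (Real.sinh u * (x ^ 2 + u ^ 2))
      = ∫ u in Set.Ioi (0:ℝ), (x ^ (-β) * x ^ 2) * (u ^ β / (Real.sinh u * (x ^ 2 + u ^ 2))) := by
    apply setIntegral_congr_fun measurableSet_Ioi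
    intro u hu
    replace hu : (0:ℝ) < u := hu
    dsimp only
    rw [Real.div_rpow hu.le hx.le, Real.rpow_neg hx.le]
    ring
  rw [h2, MeasureTheory.integral_const_mul, smul_eq_mul, ← mul_assoc]
  congr 1
  rw [show (x:ℝ) ^ 2 = x ^ (2:ℝ) by rw [← Real.rpow_natCast x 2]; norm_num,
    ← Real.rpow_neg_one x, ← Real.rpow_add hx, ← Real.rpow_add hx]
  congr 1
  ring

theorem stmt_13 (α x : ℝ) (hα : 0 < α) (hx : 0 < x) :
    Sfun α x =
      ∫ t in Set.Ioi (0:ℝ),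
        t ^ α * (t - α) / (2 * Real.sinh t) * ((x ^ 2 + α ^ 2) / (x ^ 2 + t ^ 2)) := by
  set I1 : ℝ := ∫ u in Set.Ioi (0:ℝ), u ^ (α + 1) / (Real.sinh u * (x ^ 2 + u ^ 2)) with hI1
  set I0 : ℝ := ∫ u in Set.Ioi (0:ℝ), u ^ α / (Real.sinh u * (x ^ 2 + u ^ 2)) with hI0
  have hint1 := integ_aux (α + 1) x (by linarith) hx
  have hint0 := integ_aux α x hα hx
  have hRHS : (∫ t in Set.Ioi (0:ℝ),
      t ^ α * (t - α) / (2 * Real.sinh t) * ((x ^ 2 + α ^ 2) / (x ^ 2 + t ^ 2)))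
      = (x ^ 2 + α ^ 2) / 2 * (I1 - α * I0) := by
    have e : (∫ t in Set.Ioi (0:ℝ),
        t ^ α * (t - α) / (2 * Real.sinh t) * ((x ^ 2 + α ^ 2) / (x ^ 2 + t ^ 2)))
        = ∫ t in Set.Ioi (0:ℝ), (x ^ 2 + α ^ 2) / 2 *
          (t ^ (α + 1) / (Real.sinh t * (x ^ 2 + t ^ 2))
            - α * (t ^ α / (Real.sinh t * (x ^ 2 + t ^ 2)))) := by
      apply setIntegral_congr_fun measurableSet_Ioi
      intro t ht
      replace ht : (0:ℝ) < t := ht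
      dsimp only
      have hs : Real.sinh t ≠ 0 := (Real.sinh_pos_iff.mpr ht).ne'
      have hxt : (x:ℝ) ^ 2 + t ^ 2 ≠ 0 := by positivity
      rw [Real.rpow_add_one ht.ne']
      field_simp
    rw [e, MeasureTheory.integral_const_mul,
      MeasureTheory.integral_sub hint1 (hint0.const_mul α), MeasureTheory.integral_const_mul]
  rw [hRHS]
  show Sfun α x = _
  rw [Sfun, Rfun, Ffun_eq_aux (α + 1) x hx, Ffun_eq_aux α x hx, ← hI0]
  rw [show (1:ℝ) - (α + 1) = -α by ring, ← hI1]
  have hP : (0:ℝ) < x ^ (α - 1) := Real.rpow_pos_of_pos hx _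
  have h1 : x ^ (-α) = (x ^ (α - 1) * x)⁻¹ := by
    rw [← Real.rpow_add_one hx.ne', ← Real.rpow_neg hx.le]
    congr 1; ring
  have h2 : x ^ ((1:ℝ) - α) = (x ^ (α - 1))⁻¹ := by
    rw [← Real.rpow_neg hx.le]; congr 1; ring
  rw [h1, h2]
  field_simp
end

section
/- Let α > 0 be fixed and let x > 0. Then the derivative with respect to x of H₁(α,x) = ∫₀^∞ (t^α / sinh t) · x/(x² + t²) dt satisfies d/dx H₁(α,x) ≤ −(2/(x² + α²)) · S(α,x), where S(α,x) = (α·x^{α−1}/2)·(x² + α²)·R(α,x), R(α,x) = (x/α)·F(α+1,x) − F(α,x), and F(β,x) = ∫₀^∞ t^β / (sinh(xt) · (1 + t²)) dt. -/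
open MeasureTheory Filter Real

/-! The substitution `t = x s` gives `H₁(α,x) = x^α F(α,x)`. Differentiating `F` under the
integral sign gives `∂ₓF(α,x) = -∫₀^∞ t^{α+1} cosh(xt) / (sinh²(xt)(1+t²)) dt ≤ -F(α+1,x)`,
since `cosh ≥ sinh`, and `α x^{α-1} F(α,x) - x^α F(α+1,x)` is exactly `-(2/(x²+α²)) S(α,x)`. -/

lemma Real.exp_div_four_le_sinh {u : ℝ} (hu : 1 ≤ u) : exp u / 4 ≤ sinh u := by
  have h2 : 2 ≤ exp u := by linarith [add_one_le_exp u]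
  have h1 : exp (-u) ≤ 1 := exp_le_one_iff.2 (by linarith)
  rw [sinh_eq]
  linarith

lemma Real.cosh_div_sinh_sq_le {a u : ℝ} (ha : 0 < a) (hau : a ≤ u) :
    cosh u / sinh u ^ 2 ≤ 1 / sinh a + 1 / (a * sinh a) := by
  have hsa : 0 < sinh a := sinh_pos_iff.2 ha
  have hsau : sinh a ≤ sinh u := sinh_le_sinh.2 hau
  have hu : a ≤ sinh u := hau.trans (self_le_sinh_iff.2 (ha.le.trans hau))
  have hcosh : cosh u ≤ sinh u + 1 := by
    linarith [cosh_sub_sinh u, exp_le_one_iff.2 (by linarith : -u ≤ 0)]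
  have hsu : 0 < sinh u := hsa.trans_le hsau
  calc cosh u / sinh u ^ 2 ≤ (sinh u + 1) / sinh u ^ 2 := by gcongr
    _ = 1 / sinh u + 1 / (sinh u * sinh u) := by field_simp
    _ ≤ 1 / sinh a + 1 / (a * sinh a) := by gcongr

lemma rpow_div_sinh_mul_le {c p t : ℝ} (hc : 0 < c) (ht : 0 < t) :
    t ^ p / (sinh (c * t) * (1 + t ^ 2)) ≤ c⁻¹ * t ^ (p - 1) := by
  have hct : c * t ≤ sinh (c * t) := self_le_sinh_iff.2 (by positivity)
  have hden : c * t ≤ sinh (c * t) * (1 + t ^ 2) := by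
    nlinarith [sq_nonneg t, (by positivity : 0 < c * t)]
  calc t ^ p / (sinh (c * t) * (1 + t ^ 2)) ≤ t ^ p / (c * t) :=
        div_le_div_of_nonneg_left (by positivity) (by positivity) hden
    _ = c⁻¹ * t ^ (p - 1) := by rw [rpow_sub_one ht.ne']; field_simp

lemma rpow_div_sinh_mul_isBigO_exp {c : ℝ} (hc : 0 < c) (p : ℝ) :
    (fun t : ℝ => t ^ p / (sinh (c * t) * (1 + t ^ 2))) =O[atTop]
      fun t => exp (-(c / 2) * t) := by
  have hsinh : (fun t : ℝ => t ^ p / (sinh (c * t) * (1 + t ^ 2))) =O[atTop]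
      fun t => t ^ p * exp (-(c * t)) := by
    refine Asymptotics.IsBigO.of_bound 4 ?_
    filter_upwards [eventually_ge_atTop (1 / c)] with t ht
    have hct : 1 ≤ c * t := by rwa [div_le_iff₀' hc] at ht
    have ht0 : 0 < t := by nlinarith
    have hs := exp_div_four_le_sinh hct
    rw [norm_of_nonneg (by positivity), norm_of_nonneg (by positivity), exp_neg]
    calc t ^ p / (sinh (c * t) * (1 + t ^ 2)) ≤ t ^ p / (exp (c * t) / 4 * 1) := by
          gcongr; nlinarith [sq_nonneg t]
      _ = 4 * (t ^ p * (exp (c * t))⁻¹) := by field_simp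
  have hrpow := (isLittleO_rpow_exp_pos_mul_atTop p (half_pos hc)).isBigO
  refine hsinh.trans ((hrpow.mul (Asymptotics.isBigO_refl _ _)).congr_right fun t => ?_)
  rw [← exp_add]; ring_nf

lemma integrableOn_rpow_div_sinh_mul {c p : ℝ} (hc : 0 < c) (hp : 0 < p) :
    IntegrableOn (fun t : ℝ => t ^ p / (sinh (c * t) * (1 + t ^ 2))) (Set.Ioi 0) := by
  rw [← Set.Ioc_union_Ioi_eq_Ioi zero_le_one]
  refine IntegrableOn.union ?_ ?_
  · have hdom : IntegrableOn (fun t : ℝ => c⁻¹ * t ^ (p - 1)) (Set.Ioc 0 1) := by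
      rw [← intervalIntegrable_iff_integrableOn_Ioc_of_le zero_le_one]
      exact (intervalIntegral.intervalIntegrable_rpow' (by linarith)).const_mul _
    refine hdom.mono' (Measurable.aestronglyMeasurable (by fun_prop)) ((ae_restrict_iff' measurableSet_Ioc).2 ?_)
    refine .of_forall fun t ⟨ht0, _⟩ => ?_
    rw [norm_of_nonneg (by positivity)]
    exact rpow_div_sinh_mul_le hc ht0
  · refine integrable_of_isBigO_exp_neg (half_pos hc) (fun t ht => ?_)
      (rpow_div_sinh_mul_isBigO_exp hc p)
    have ht0 : 0 < t := one_pos.trans_le ht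
    exact ((continuousAt_rpow_const _ _ (.inl ht0.ne')).div (by fun_prop)
      (by positivity)).continuousWithinAt

lemma hasDerivAt_rpow_div_sinh_mul {β t y : ℝ} (ht : 0 < t) (hy : 0 < y) :
    HasDerivAt (fun z : ℝ => t ^ β / (sinh (z * t) * (1 + t ^ 2)))
      (-(t ^ (β + 1) * cosh (y * t) / (sinh (y * t) ^ 2 * (1 + t ^ 2)))) y := by
  have hden : HasDerivAt (fun z : ℝ => sinh (z * t) * (1 + t ^ 2))
      (cosh (y * t) * t * (1 + t ^ 2)) y :=
    ((hasDerivAt_sinh _).comp y (hasDerivAt_mul_const t)).mul_const _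
  refine ((hasDerivAt_const y (t ^ β)).div hden (by positivity)).congr_deriv ?_
  rw [rpow_add_one ht.ne']
  field_simp
  ring

lemma rpow_mul_cosh_div_sinh_sq_le {β c y t : ℝ} (hc : 0 < c) (hcy : c ≤ y) (ht : 0 < t) :
    t ^ (β + 1) * cosh (y * t) / (sinh (y * t) ^ 2 * (1 + t ^ 2)) ≤
      t ^ (β + 1) / (sinh (c * t) * (1 + t ^ 2)) +
        c⁻¹ * (t ^ β / (sinh (c * t) * (1 + t ^ 2))) := by
  have hcosh := cosh_div_sinh_sq_le (mul_pos hc ht) (mul_le_mul_of_nonneg_right hcy ht.le)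
  calc t ^ (β + 1) * cosh (y * t) / (sinh (y * t) ^ 2 * (1 + t ^ 2))
      = t ^ (β + 1) / (1 + t ^ 2) * (cosh (y * t) / sinh (y * t) ^ 2) := by field_simp
    _ ≤ t ^ (β + 1) / (1 + t ^ 2) * (1 / sinh (c * t) + 1 / (c * t * sinh (c * t))) := by
      gcongr
    _ = _ := by rw [rpow_add_one ht.ne']; field_simp

lemma hasDerivAt_Ffun {β x : ℝ} (hβ : 0 < β) (hx : 0 < x) :
    IntegrableOn (fun t => t ^ (β + 1) * cosh (x * t) / (sinh (x * t) ^ 2 * (1 + t ^ 2)))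
        (Set.Ioi 0) ∧
      HasDerivAt (Ffun β)
        (-∫ t in Set.Ioi 0, t ^ (β + 1) * cosh (x * t) / (sinh (x * t) ^ 2 * (1 + t ^ 2))) x := by
  set c := x / 2 with hc_def
  have hc : 0 < c := by positivity
  have hball : ∀ y ∈ Metric.ball x c, c < y := fun y hy => by
    linarith [(abs_lt.1 (Real.dist_eq y x ▸ Metric.mem_ball.1 hy)).1, hc_def]
  obtain ⟨hint, hderiv⟩ := hasDerivAt_integral_of_dominated_loc_of_deriv_le
    (μ := volume.restrict (Set.Ioi 0)) (x₀ := x)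
    (F := fun y t => t ^ β / (sinh (y * t) * (1 + t ^ 2)))
    (F' := fun y t => -(t ^ (β + 1) * cosh (y * t) / (sinh (y * t) ^ 2 * (1 + t ^ 2))))
    (bound := fun t => t ^ (β + 1) / (sinh (c * t) * (1 + t ^ 2)) +
      c⁻¹ * (t ^ β / (sinh (c * t) * (1 + t ^ 2))))
    (Metric.ball_mem_nhds x hc)
    (.of_forall fun y => Measurable.aestronglyMeasurable (by fun_prop))
    (integrableOn_rpow_div_sinh_mul hx hβ)
    (Measurable.aestronglyMeasurable (by fun_prop))
    ((ae_restrict_iff' measurableSet_Ioi).2 <| .of_forall fun t (ht : 0 < t) y hy => by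
      have hy0 : 0 < y := hc.trans (hball y hy)
      rw [norm_neg, norm_of_nonneg (by positivity)]
      exact rpow_mul_cosh_div_sinh_sq_le hc (hball y hy).le ht)
    ((integrableOn_rpow_div_sinh_mul hc (by linarith)).fun_add
      ((integrableOn_rpow_div_sinh_mul hc hβ).const_mul c⁻¹))
    ((ae_restrict_iff' measurableSet_Ioi).2 <| .of_forall fun t (ht : 0 < t) y hy =>
      hasDerivAt_rpow_div_sinh_mul ht (hc.trans (hball y hy)))
  rw [integral_neg] at hderiv
  exact ⟨integrable_neg_iff.1 hint, hderiv⟩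

lemma Ffun_le_integral_cosh {p x : ℝ} (hp : 0 < p) (hx : 0 < x)
    (hint : IntegrableOn (fun t => t ^ p * cosh (x * t) / (sinh (x * t) ^ 2 * (1 + t ^ 2)))
      (Set.Ioi 0)) :
    Ffun p x ≤ ∫ t in Set.Ioi 0, t ^ p * cosh (x * t) / (sinh (x * t) ^ 2 * (1 + t ^ 2)) := by
  refine setIntegral_mono_on (integrableOn_rpow_div_sinh_mul hx hp) hint measurableSet_Ioi
    fun t (ht : 0 < t) => ?_
  have hs : 0 < sinh (x * t) := by positivity
  calc t ^ p / (sinh (x * t) * (1 + t ^ 2))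
      ≤ t ^ p / (sinh (x * t) * (1 + t ^ 2)) * (cosh (x * t) / sinh (x * t)) :=
        le_mul_of_one_le_right (by positivity) ((one_le_div hs).2 (sinh_lt_cosh _).le)
    _ = t ^ p * cosh (x * t) / (sinh (x * t) ^ 2 * (1 + t ^ 2)) := by field_simp

lemma H1fun_eq_rpow_mul_Ffun (α : ℝ) {y : ℝ} (hy : 0 < y) : H1fun α y = y ^ α * Ffun α y := by
  have h := integral_comp_mul_left_Ioi' (fun t => t ^ α / sinh t * (y / (y ^ 2 + t ^ 2))) 0 hy
  rw [mul_zero] at h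
  rw [H1fun, ← h, Ffun, setIntegral_congr_fun measurableSet_Ioi
    (g := fun s => y ^ (α - 1) * (s ^ α / (sinh (y * s) * (1 + s ^ 2)))), integral_const_mul,
    smul_eq_mul, rpow_sub_one hy.ne']
  · field_simp
  · intro s (hs : 0 < s)
    simp only
    rw [mul_rpow hy.le hs.le, rpow_sub_one hy.ne']
    field_simp

lemma neg_two_div_mul_Sfun {α x : ℝ} (hα : α ≠ 0) (hx : 0 < x) :
    -(2 / (x ^ 2 + α ^ 2)) * Sfun α x =
      α * x ^ (α - 1) * Ffun α x - x ^ α * Ffun (α + 1) x := by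
  have hsq : x ^ 2 + α ^ 2 ≠ 0 := by positivity
  rw [Sfun, Rfun, rpow_sub_one hx.ne']
  field_simp
  ring

theorem stmt_14 (α x : ℝ) (hα : 0 < α) (hx : 0 < x) :
    ∃ d : ℝ, HasDerivAt (fun y : ℝ => H1fun α y) d x ∧
      d ≤ -(2 / (x ^ 2 + α ^ 2)) * Sfun α x := by
  obtain ⟨hint, hF⟩ := hasDerivAt_Ffun hα hx
  have hH1 : (fun y => H1fun α y) =ᶠ[nhds x] fun y => y ^ α * Ffun α y :=
    eventually_of_mem (Ioi_mem_nhds hx) fun y hy => H1fun_eq_rpow_mul_Ffun α hy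
  refine ⟨_, ((hasDerivAt_rpow_const (.inl hx.ne')).mul hF).congr_of_eventuallyEq hH1, ?_⟩
  rw [neg_two_div_mul_Sfun hα.ne' hx, mul_neg, ← sub_eq_add_neg]
  gcongr
  exact Ffun_le_integral_cosh (by linarith) hx hint
end

section
/- Let α > 2. Then R(α,α) ≥ (2 − 2^{−(α+1)}) · G(α+1,α) − (2 − 2^{2−α}) · (1 + 2^{1−α} + 2^{2−α}/(α−2)) · G(α,α), where R(α,α) = F(α+1,α) − F(α,α), F(β,x) = ∫₀^∞ t^β / (sinh(xt)·(1 + t²)) dt, and G(β,x) = ∫₀^∞ t^β · e^{−xt} / (1 + t²) dt. -/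
open MeasureTheory Filter Real

/-- `G(β,x) = ∫₀^∞ t^β·e^{−xt}/(1+t²) dt`. -/
noncomputable def Gfun (β x : ℝ) : ℝ :=
  ∫ t in Set.Ioi (0:ℝ), t ^ β * Real.exp (-(x * t)) / (1 + t ^ 2)

/-!
Expanding `1 / sinh u = 2 ∑ₙ e^{-(2n+1)u}` gives `F(β,x) = 2 ∑ₙ G(β,(2n+1)x)`, and the
substitution `t ↦ kt` shows `G(β,kx) ≤ k^{1-β} G(β,x)` for `k ≥ 1`. Hence
`2 G(β,x) ≤ F(β,x) ≤ 2 G(β,x) ∑ₙ (2n+1)^{1-β}`. By AM–GM,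
`(m-y)^{-(p+1)} + (m+y)^{-(p+1)} ≥ 2 m^{-(p+1)}`; integrating over `y ∈ [0,1]` gives
`2p m^{-(p+1)} ≤ (m-1)^{-p} - (m+1)^{-p}`, so the odd series telescopes to at most
`1 + 2^{2-β} / (2(β-2))`. Taking `β = α + 1` in the lower bound and `β = α` in the upper one
gives the theorem, the final constant being larger because `α ≤ 2^{α-1}` (Bernoulli).
-/

open Set

theorem hasSum_inv_sinh {u : ℝ} (hu : 0 < u) :
    HasSum (fun n : ℕ => 2 * exp (-((2 * n + 1) * u))) (sinh u)⁻¹ := by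
  have hr : exp (-(2 * u)) < 1 := exp_lt_one_iff.mpr (by linarith)
  have hterms : (fun n : ℕ => 2 * exp (-((2 * n + 1) * u)))
      = fun n => 2 * exp (-u) * exp (-(2 * u)) ^ n := by
    funext n
    rw [← exp_nat_mul, mul_assoc, ← exp_add]
    ring_nf
  have hvalue : (sinh u)⁻¹ = 2 * exp (-u) * (1 - exp (-(2 * u)))⁻¹ := by
    have hsub : 0 < 1 - exp (-(2 * u)) := sub_pos.mpr hr
    have hprod : exp u * exp (-u) = 1 := by rw [← exp_add]; simp
    have hsq : exp (-(2 * u)) = exp (-u) * exp (-u) := by rw [← exp_add]; ring_nf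
    have hsinh : 0 < sinh u := sinh_pos_iff.mpr hu
    rw [eq_comm, mul_inv_eq_iff_eq_mul₀ hsub.ne', eq_inv_mul_iff_mul_eq₀ hsinh.ne', sinh_eq, hsq]
    linear_combination hprod
  rw [hterms, hvalue]
  exact (hasSum_geometric_of_lt_one (exp_pos _).le hr).mul_left _

theorem integrableOn_Gfun_integrand {β x : ℝ} (hβ : -1 < β) (hx : 0 < x) :
    IntegrableOn (fun t => t ^ β * exp (-(x * t)) / (1 + t ^ 2)) (Ioi 0) := by
  have hγ : IntegrableOn (fun t : ℝ => t ^ β * exp (-x * t ^ (1 : ℝ))) (Ioi 0) :=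
    integrableOn_rpow_mul_exp_neg_mul_rpow hβ one_pos hx
  refine hγ.mono' (Measurable.aestronglyMeasurable (by fun_prop)) ?_
  filter_upwards [self_mem_ae_restrict measurableSet_Ioi] with t (ht : 0 < t)
  rw [norm_of_nonneg (by positivity), rpow_one, neg_mul]
  exact div_le_self (by positivity) (by nlinarith)

theorem Gfun_nonneg (β x : ℝ) : 0 ≤ Gfun β x :=
  setIntegral_nonneg measurableSet_Ioi fun t (ht : 0 < t) => by positivity

theorem Gfun_mul_le {β x k : ℝ} (hβ : -1 < β) (hx : 0 < x) (hk : 1 ≤ k) :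
    Gfun β (k * x) ≤ k ^ (1 - β) * Gfun β x := by
  have hk0 : 0 < k := by linarith
  set g : ℝ → ℝ := fun s => k ^ (2 - β) * (s ^ β * exp (-(x * s)) / (k ^ 2 + s ^ 2))
  have hg : ∀ t ∈ Ioi (0 : ℝ), t ^ β * exp (-(k * x * t)) / (1 + t ^ 2) = g (k * t) := by
    intro t (ht : 0 < t)
    have hkk : k ^ (2 - β) * k ^ β = k ^ 2 := by
      rw [← rpow_add hk0, sub_add_cancel, rpow_two]
    simp only [g, mul_rpow hk0.le ht.le]
    field_simp
    exact hkk.symm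
  calc Gfun β (k * x) = ∫ t in Ioi 0, g (k * t) := setIntegral_congr_fun measurableSet_Ioi hg
    _ = k⁻¹ * ∫ s in Ioi 0, g s := by
      rw [integral_comp_mul_left_Ioi g 0 hk0, mul_zero, smul_eq_mul]
    _ ≤ k⁻¹ * ∫ s in Ioi 0, k ^ (2 - β) * (s ^ β * exp (-(x * s)) / (1 + s ^ 2)) := by
      refine mul_le_mul_of_nonneg_left (integral_mono_of_nonneg ?_
        ((integrableOn_Gfun_integrand hβ hx).const_mul _) ?_) (by positivity)
      all_goals filter_upwards [self_mem_ae_restrict measurableSet_Ioi] with s (hs : 0 < s)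
      · positivity
      · exact mul_le_mul_of_nonneg_left
          (div_le_div_of_nonneg_left (by positivity) (by positivity) (by nlinarith)) (by positivity)
    _ = k ^ (1 - β) * Gfun β x := by
      rw [integral_const_mul, Gfun, ← mul_assoc, show 2 - β = 1 - β + 1 by ring,
        rpow_add_one hk0.ne', mul_comm _ k, inv_mul_cancel_left₀ hk0.ne']

theorem two_mul_rpow_neg_le_add {a b m c : ℝ} (ha : 0 < a) (hb : 0 < b) (hm : 0 < m)
    (hc : 0 ≤ c) (hab : a * b ≤ m ^ 2) : 2 * m ^ (-c) ≤ a ^ (-c) + b ^ (-c) := by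
  have hsq : ∀ y : ℝ, 0 ≤ y → (y ^ (-c / 2)) ^ 2 = y ^ (-c) := fun y hy => by
    rw [← rpow_mul_natCast hy]; ring_nf
  calc 2 * m ^ (-c) = 2 * (m ^ 2) ^ (-c / 2) := by
        rw [← rpow_natCast, ← rpow_mul hm.le]; ring_nf
    _ ≤ 2 * (a * b) ^ (-c / 2) := by
      gcongr 2 * ?_
      exact rpow_le_rpow_of_nonpos (by positivity) hab (by linarith)
    _ = 2 * a ^ (-c / 2) * b ^ (-c / 2) := by rw [mul_rpow ha.le hb.le]; ring
    _ ≤ (a ^ (-c / 2)) ^ 2 + (b ^ (-c / 2)) ^ 2 := two_mul_le_add_sq _ _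
    _ = a ^ (-c) + b ^ (-c) := by rw [hsq a ha.le, hsq b hb.le]

theorem two_mul_mul_rpow_neg_le_sub {p m : ℝ} (hp : 0 < p) (hm : 1 < m) :
    2 * p * m ^ (-(p + 1)) ≤ (m - 1) ^ (-p) - (m + 1) ^ (-p) := by
  set g : ℝ → ℝ := fun y => (m - y) ^ (-p) - (m + y) ^ (-p)
  have hg : ∀ y ∈ Icc (0 : ℝ) 1,
      HasDerivAt g (p * (m - y) ^ (-(p + 1)) + p * (m + y) ^ (-(p + 1))) y := by
    rintro y ⟨hy0, hy1⟩
    have hsub := ((hasDerivAt_id y).const_sub m).rpow_const (p := -p) (Or.inl (by simp; linarith))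
    have hadd := ((hasDerivAt_id y).const_add m).rpow_const (p := -p) (Or.inl (by simp; linarith))
    rw [show -(p + 1) = -p - 1 by ring]
    exact (hsub.sub hadd).congr_deriv (by simp only [id_eq]; ring)
  have hmono := (convex_Icc (0 : ℝ) 1).mul_sub_le_image_sub_of_le_deriv
    (C := 2 * p * m ^ (-(p + 1)))
    (fun y hy => (hg y hy).continuousAt.continuousWithinAt)
    (fun y hy => (hg y (interior_subset hy)).differentiableAt.differentiableWithinAt)
    (fun y hy => by
      rw [interior_Icc] at hy
      obtain ⟨hy0, hy1⟩ := hy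
      rw [(hg y (Ioo_subset_Icc_self ⟨hy0, hy1⟩)).deriv]
      have := two_mul_rpow_neg_le_add (m := m) (by linarith : 0 < m - y) (by linarith : 0 < m + y)
        (by linarith) (by linarith : 0 ≤ p + 1) (by nlinarith)
      nlinarith)
    0 (by simp) 1 (by simp) zero_le_one
  simpa [g] using hmono

theorem sum_range_odd_rpow_le {β : ℝ} (hβ : 2 < β) (N : ℕ) :
    ∑ n ∈ Finset.range N, (2 * n + 1 : ℝ) ^ (1 - β) ≤ 1 + 2 ^ (2 - β) / (2 * (β - 2)) := by
  have hp : 0 < β - 2 := by linarith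
  have htelescope : ∀ M : ℕ, ∑ n ∈ Finset.range (M + 1), (2 * n + 1 : ℝ) ^ (1 - β)
      ≤ 1 + (2 ^ (2 - β) - (2 * M + 2) ^ (2 - β)) / (2 * (β - 2)) := by
    intro M
    induction M with
    | zero => simp
    | succ M ih =>
      have hM : (0 : ℝ) ≤ M := M.cast_nonneg
      have hstep := two_mul_mul_rpow_neg_le_sub hp (m := 2 * M + 3) (by linarith)
      rw [show -(β - 2 + 1) = 1 - β by ring, show -(β - 2) = 2 - β by ring,
        show (2 * M + 3 : ℝ) - 1 = 2 * M + 2 by ring,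
        show (2 * M + 3 : ℝ) + 1 = 2 * (M + 1) + 2 by ring] at hstep
      have hterm : (2 * M + 3 : ℝ) ^ (1 - β)
          ≤ ((2 * M + 2) ^ (2 - β) - (2 * (M + 1) + 2) ^ (2 - β)) / (2 * (β - 2)) := by
        rw [le_div_iff₀ (by positivity)]
        linarith
      rw [Finset.sum_range_succ]
      push_cast
      rw [show (2 * (M + 1) + 1 : ℝ) = 2 * M + 3 by ring]
      have hsplit : (2 ^ (2 - β) - (2 * (M + 1) + 2 : ℝ) ^ (2 - β)) / (2 * (β - 2))
          = (2 ^ (2 - β) - (2 * M + 2) ^ (2 - β)) / (2 * (β - 2))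
            + ((2 * M + 2) ^ (2 - β) - (2 * (M + 1) + 2) ^ (2 - β)) / (2 * (β - 2)) := by ring
      linarith
  calc ∑ n ∈ Finset.range N, (2 * n + 1 : ℝ) ^ (1 - β)
      ≤ ∑ n ∈ Finset.range (N + 1), (2 * n + 1 : ℝ) ^ (1 - β) :=
        Finset.sum_le_sum_of_subset_of_nonneg (by simp) (fun _ _ _ => by positivity)
    _ ≤ 1 + 2 ^ (2 - β) / (2 * (β - 2)) := by
      refine (htelescope N).trans ?_
      gcongr
      exact sub_le_self _ (by positivity)

theorem summable_odd_rpow {β : ℝ} (hβ : 2 < β) :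
    Summable fun n : ℕ => (2 * n + 1 : ℝ) ^ (1 - β) :=
  summable_of_sum_range_le (fun _ => by positivity) (sum_range_odd_rpow_le hβ)

theorem tsum_odd_rpow_le {β : ℝ} (hβ : 2 < β) :
    ∑' n : ℕ, (2 * n + 1 : ℝ) ^ (1 - β) ≤ 1 + 2 ^ (2 - β) / (2 * (β - 2)) :=
  Real.tsum_le_of_sum_range_le (fun _ => by positivity) (sum_range_odd_rpow_le hβ)

theorem Gfun_odd_mul_le {β x : ℝ} (hβ : -1 < β) (hx : 0 < x) (n : ℕ) :
    Gfun β ((2 * n + 1) * x) ≤ (2 * n + 1 : ℝ) ^ (1 - β) * Gfun β x :=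
  Gfun_mul_le hβ hx (by linarith [n.cast_nonneg (α := ℝ)])

theorem hasSum_Ffun {β x : ℝ} (hβ : 2 < β) (hx : 0 < x) :
    HasSum (fun n : ℕ => 2 * Gfun β ((2 * n + 1) * x)) (Ffun β x) := by
  set F : ℕ → ℝ → ℝ := fun n t => 2 * (t ^ β * exp (-((2 * n + 1) * x * t)) / (1 + t ^ 2))
  have hF_int : ∀ n, IntegrableOn (F n) (Ioi 0) := fun n =>
    (integrableOn_Gfun_integrand (by linarith) (by positivity)).const_mul 2
  have hF_int_eq : ∀ n, ∫ t in Ioi 0, F n t = 2 * Gfun β ((2 * n + 1) * x) := fun n =>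
    integral_const_mul _ _
  have hF_norm : ∀ n, ∫ t in Ioi 0, ‖F n t‖ = ∫ t in Ioi 0, F n t := fun n =>
    setIntegral_congr_fun measurableSet_Ioi fun t (ht : 0 < t) =>
      norm_of_nonneg (by positivity)
  have hsum : Summable fun n : ℕ => 2 * Gfun β ((2 * n + 1) * x) :=
    (((summable_odd_rpow hβ).mul_right (Gfun β x)).mul_left 2).of_nonneg_of_le
      (fun n => mul_nonneg zero_le_two (Gfun_nonneg _ _))
      (fun n => mul_le_mul_of_nonneg_left (Gfun_odd_mul_le (by linarith) hx n) zero_le_two)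
  have h := hasSum_integral_of_summable_integral_norm hF_int
    (by simp only [hF_norm, hF_int_eq]; exact hsum)
  simp only [hF_int_eq] at h
  suffices hF : Ffun β x = ∫ t in Ioi 0, ∑' n, F n t by rw [hF]; exact h
  refine setIntegral_congr_fun measurableSet_Ioi fun t (ht : 0 < t) => ?_
  have hpt := (hasSum_inv_sinh (mul_pos hx ht)).mul_left (t ^ β / (1 + t ^ 2))
  calc t ^ β / (sinh (x * t) * (1 + t ^ 2)) = t ^ β / (1 + t ^ 2) * (sinh (x * t))⁻¹ := by
        field_simp
    _ = ∑' n, F n t := by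
      rw [← hpt.tsum_eq]
      congr with n
      simp only [F]
      ring_nf

theorem two_mul_Gfun_le_Ffun {β x : ℝ} (hβ : 2 < β) (hx : 0 < x) :
    2 * Gfun β x ≤ Ffun β x := by
  simpa using le_hasSum (hasSum_Ffun hβ hx) 0 fun n _ => mul_nonneg zero_le_two (Gfun_nonneg _ _)

theorem Ffun_le {β x : ℝ} (hβ : 2 < β) (hx : 0 < x) :
    Ffun β x ≤ (2 + 2 ^ (2 - β) / (β - 2)) * Gfun β x := by
  have hG := Gfun_nonneg β x
  calc Ffun β x = ∑' n : ℕ, 2 * Gfun β ((2 * n + 1) * x) := (hasSum_Ffun hβ hx).tsum_eq.symm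
    _ ≤ ∑' n : ℕ, 2 * Gfun β x * (2 * n + 1 : ℝ) ^ (1 - β) :=
      (hasSum_Ffun hβ hx).summable.tsum_le_tsum
        (fun n => by nlinarith [Gfun_odd_mul_le (by linarith : -1 < β) hx n])
        ((summable_odd_rpow hβ).mul_left _)
    _ = 2 * Gfun β x * ∑' n : ℕ, (2 * n + 1 : ℝ) ^ (1 - β) := tsum_mul_left
    _ ≤ 2 * Gfun β x * (1 + 2 ^ (2 - β) / (2 * (β - 2))) := by
      gcongr
      exact tsum_odd_rpow_le hβ
    _ = (2 + 2 ^ (2 - β) / (β - 2)) * Gfun β x := by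
      field_simp

theorem two_add_rpow_div_le {α : ℝ} (hα : 2 < α) :
    2 + (2 : ℝ) ^ (2 - α) / (α - 2)
      ≤ (2 - (2 : ℝ) ^ (2 - α)) * (1 + (2 : ℝ) ^ (1 - α) + (2 : ℝ) ^ (2 - α) / (α - 2)) := by
  set y := (2 : ℝ) ^ (2 - α)
  have hy : 0 < y := by positivity
  have hhalf : (2 : ℝ) ^ (1 - α) = y / 2 := by
    rw [show 1 - α = 2 - α - 1 by ring, rpow_sub_one two_ne_zero]
  have hbernoulli : α ≤ (2 : ℝ) ^ (α - 1) := by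
    have := one_add_mul_self_le_rpow_one_add (s := 1) (by norm_num) (p := α - 1) (by linarith)
    norm_num at this
    linarith
  have hyα : y * α ≤ 2 := by
    calc y * α ≤ y * (2 : ℝ) ^ (α - 1) := by gcongr
      _ = 2 := by rw [← rpow_add two_pos]; norm_num
  rw [hhalf, ← sub_nonneg]
  have hd : 0 < α - 2 := by linarith
  have hid : (2 - y) * (1 + y / 2 + y / (α - 2)) - (2 + y / (α - 2))
      = y * (2 - y * α) / (2 * (α - 2)) := by
    field_simp
    ring
  rw [hid]
  have : 0 ≤ 2 - y * α := by linarith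
  positivity

theorem stmt_17 (α : ℝ) (hα : 2 < α) :
    Ffun (α + 1) α - Ffun α α ≥
      (2 - (2 : ℝ) ^ (-(α + 1))) * Gfun (α + 1) α -
        (2 - (2 : ℝ) ^ (2 - α)) *
          (1 + (2 : ℝ) ^ (1 - α) + (2 : ℝ) ^ (2 - α) / (α - 2)) * Gfun α α := by
  have hα0 : 0 < α := by linarith
  have hF_succ := two_mul_Gfun_le_Ffun (by linarith : 2 < α + 1) hα0
  have hF := Ffun_le hα hα0
  have hcoeff := mul_le_mul_of_nonneg_right (two_add_rpow_div_le hα) (Gfun_nonneg α α)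
  have hsmall := mul_nonneg (rpow_pos_of_pos two_pos (-(α + 1))).le (Gfun_nonneg (α + 1) α)
  linarith
end
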